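/- arXiv:math/0509459 — 3 statements merged into one kernel-verified Lean document; each statement's English description precedes it below -/
import Mathlib

section
/- For every ξ ∈ ℝⁿ, the function g ↦ φ_ξ^K(g·0) on the group G = ℝⁿ ⋊ K is positive definite: for all m > 0, c_1,…,c_m ∈ ℂ and g_1,…,g_m ∈ G, we have ∑_{i,j} φ_ξ^K(g_j⁻¹ g_i · 0) · conj(c_j) · c_i ≥ 0 (the sum is real and nonnegative). -/
/-!
Because `ρ` takes values in the orthogonal group and `μ` is left invariant, `φ_ξ^K` is
`K`-invariant, so only the translation parts `v_i` of the `g_i` matter. For real `ξ`,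
`φ_ξ^K(v_i - v_j) = ∫ e_i · conj e_j dμ` with the plane waves `e_i(k) = exp(i⟨v_i, k·ξ⟩)`,
so the quadratic form equals `∫ |∑ c_i e_i|² dμ ≥ 0`.
-/

open MeasureTheory Complex

noncomputable section

/-- Complexification of a real matrix. -/
def matC {n : ℕ} (A : Matrix (Fin n) (Fin n) ℝ) : Matrix (Fin n) (Fin n) ℂ :=
  A.map (fun r => (r : ℂ))

/-- The ℂ-bilinear extension of the standard inner product on ℝⁿ. -/
def bC {n : ℕ} (x ξ : Fin n → ℂ) : ℂ := ∑ i, x i * ξ i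

/-- Inclusion of ℝⁿ into ℂⁿ. -/
def cplx {n : ℕ} (x : Fin n → ℝ) : Fin n → ℂ := fun i => (x i : ℂ)

/-- The averaged function `φ_ξ^K(x) = ∫_K exp(i b(x, k·ξ)) dμ_K(k)`, where the
compact group `K` acts on ℂⁿ through `ρ` by the complexification of its real
orthogonal action. -/
def phiK {n : ℕ} {K : Type} [Group K] [TopologicalSpace K] [MeasurableSpace K]
    (μ : Measure K) (ρ : K →* Matrix.orthogonalGroup (Fin n) ℝ)
    (ξ : Fin n → ℂ) (x : Fin n → ℝ) : ℂ :=
  ∫ k, Complex.exp (Complex.I * bC (cplx x) ((matC ((ρ k : Matrix.orthogonalGroup (Fin n) ℝ) : Matrix (Fin n) (Fin n) ℝ)).mulVec ξ)) ∂μ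

open Matrix ComplexConjugate
open scoped ComplexOrder

theorem sum_sum_integral_mul_conj_nonneg {ι α : Type*} [Fintype ι] [MeasurableSpace α]
    {μ : Measure α} (F : ι → α → ℂ)
    (hF : ∀ i j, Integrable (fun a => F i a * conj (F j a)) μ) :
    0 ≤ ∑ i, ∑ j, ∫ a, F i a * conj (F j a) ∂μ := by
  have hsum : ∑ i, ∑ j, ∫ a, F i a * conj (F j a) ∂μ
      = ((∫ a, normSq (∑ i, F i a) ∂μ : ℝ) : ℂ) := by
    rw [← integral_complex_ofReal]
    simp_rw [← mul_conj, map_sum, Finset.sum_mul_sum]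
    rw [integral_finsetSum _ fun i _ => integrable_finsetSum _ fun j _ => hF i j]
    exact Finset.sum_congr rfl fun i _ => (integral_finsetSum _ fun j _ => hF i j).symm
  rw [hsum, zero_le_real]
  exact integral_nonneg fun a => normSq_nonneg _

theorem exp_I_mul_ofReal_sub (a b : ℝ) :
    exp (I * ((a - b : ℝ) : ℂ)) = exp (I * a) * conj (exp (I * b)) := by
  rw [← exp_conj, ← exp_add, map_mul, conj_I, conj_ofReal]
  push_cast
  ring_nf

section

variable {n : ℕ}

theorem matC_mul (A B : Matrix (Fin n) (Fin n) ℝ) : matC (A * B) = matC A * matC B :=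
  Matrix.map_mul (f := ofRealHom)

theorem bC_cplx_mulVec_cplx (x ξ : Fin n → ℝ) (A : Matrix (Fin n) (Fin n) ℝ) :
    bC (cplx x) (matC A *ᵥ cplx ξ) = ((x ⬝ᵥ A *ᵥ ξ : ℝ) : ℂ) := by
  simp [bC, cplx, matC, mulVec, dotProduct, Finset.mul_sum]

theorem bC_cplx_transpose_mulVec (A : Matrix (Fin n) (Fin n) ℝ) (x : Fin n → ℝ)
    (η : Fin n → ℂ) : bC (cplx (Aᵀ *ᵥ x)) η = bC (cplx x) (matC A *ᵥ η) := by
  have hcplx : cplx (Aᵀ *ᵥ x) = (matC A)ᵀ *ᵥ cplx x := by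
    ext i
    exact RingHom.map_mulVec ofRealHom Aᵀ x i
  change cplx (Aᵀ *ᵥ x) ⬝ᵥ η = cplx x ⬝ᵥ matC A *ᵥ η
  rw [hcplx, mulVec_transpose, dotProduct_mulVec]

variable {K : Type} [Group K] [TopologicalSpace K] [MeasurableSpace K]
  (μ : Measure K) (ρ : K →* Matrix.orthogonalGroup (Fin n) ℝ)

theorem phiK_cplx_eq_integral (ξ x : Fin n → ℝ) :
    phiK μ ρ (cplx ξ) x
      = ∫ k, exp (I * ((x ⬝ᵥ (ρ k : Matrix (Fin n) (Fin n) ℝ) *ᵥ ξ : ℝ) : ℂ)) ∂μ := by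
  simp only [phiK, bC_cplx_mulVec_cplx]

theorem phiK_inv_mulVec [MeasurableMul K] [μ.IsMulLeftInvariant] (ξ : Fin n → ℂ) (h : K)
    (x : Fin n → ℝ) :
    phiK μ ρ ξ (((ρ h)⁻¹ : Matrix.orthogonalGroup (Fin n) ℝ) *ᵥ x) = phiK μ ρ ξ x := by
  have hinv : (((ρ h)⁻¹ : Matrix.orthogonalGroup (Fin n) ℝ) : Matrix (Fin n) (Fin n) ℝ)
      = (ρ h : Matrix (Fin n) (Fin n) ℝ)ᵀ := rfl
  simp only [phiK, hinv, bC_cplx_transpose_mulVec, mulVec_mulVec, ← matC_mul,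
    ← Submonoid.coe_mul, ← map_mul]
  exact integral_mul_left_eq_self (μ := μ)
    (fun k => exp (I * bC (cplx x) (matC (ρ k : Matrix (Fin n) (Fin n) ℝ) *ᵥ ξ))) h

theorem sum_sum_phiK_sub_mul_nonneg [OpensMeasurableSpace K] [IsFiniteMeasure μ]
    (hρ : Continuous fun k => (ρ k : Matrix (Fin n) (Fin n) ℝ))
    (ξ : Fin n → ℝ) {ι : Type*} [Fintype ι] (v : ι → Fin n → ℝ) (c : ι → ℂ) :
    0 ≤ ∑ i, ∑ j, phiK μ ρ (cplx ξ) (v i - v j) * conj (c j) * c i := by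
  set F : ι → K → ℂ := fun i k =>
    c i * exp (I * ((v i ⬝ᵥ (ρ k : Matrix (Fin n) (Fin n) ℝ) *ᵥ ξ : ℝ) : ℂ))
  have hF_cont : ∀ i, Continuous (F i) := fun i => by fun_prop
  have hF_norm : ∀ i k, ‖F i k‖ = ‖c i‖ := fun i k => by
    simp [F, norm_exp_ofReal_mul_I, mul_comm I]
  have hF_int : ∀ i j, Integrable (fun k => F i k * conj (F j k)) μ := fun i j =>
    Integrable.of_bound ((hF_cont i).mul (continuous_conj.comp (hF_cont j))).aestronglyMeasurable
      (‖c i‖ * ‖c j‖) (ae_of_all _ fun k => by simp [hF_norm])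
  have hterm : ∀ i j, phiK μ ρ (cplx ξ) (v i - v j) * conj (c j) * c i
      = ∫ k, F i k * conj (F j k) ∂μ := fun i j => by
    rw [phiK_cplx_eq_integral, mul_assoc, ← integral_mul_const]
    congr 1 with k
    rw [sub_dotProduct, exp_I_mul_ofReal_sub]
    simp only [F, map_mul]
    ring
  simp only [hterm]
  exact sum_sum_integral_mul_conj_nonneg F hF_int

end

/-- An element `g` of `G = ℝⁿ ⋊ K` is recorded as a pair `(v, k)`, acting on ℝⁿ by
`x ↦ v + k·x`; then `g_j⁻¹ g_i · 0 = k_j⁻¹ · (v_i - v_j)`. -/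
theorem stmt3_general {n : ℕ} {K : Type} [Group K] [TopologicalSpace K] [IsTopologicalGroup K]
    [CompactSpace K] [MeasurableSpace K] [BorelSpace K]
    (μ : Measure K) [μ.IsHaarMeasure]
    (ρ : K →* Matrix.orthogonalGroup (Fin n) ℝ)
    (hρ : Continuous fun k => ((ρ k : Matrix.orthogonalGroup (Fin n) ℝ) : Matrix (Fin n) (Fin n) ℝ))
    (ξ : Fin n → ℝ)
    (m : ℕ) (c : Fin m → ℂ) (g : Fin m → (Fin n → ℝ) × K) :
    0 ≤ ∑ i, ∑ j,
      phiK μ ρ (cplx ξ)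
        (Matrix.mulVec (((ρ (g j).2)⁻¹ : Matrix.orthogonalGroup (Fin n) ℝ) : Matrix (Fin n) (Fin n) ℝ)
          ((g i).1 - (g j).1)) * (starRingEnd ℂ) (c j) * c i := by
  simp only [phiK_inv_mulVec]
  exact sum_sum_phiK_sub_mul_nonneg μ ρ hρ ξ (fun i => (g i).1) c

/-- for real `ξ`, the function `g ↦ φ_ξ^K(g·0)` on `G = ℝⁿ ⋊ K` is
positive definite.  An element `g` of `G` is recorded as a pair `(v, k)`, acting
on ℝⁿ by `x ↦ v + k·x`; then `g_j⁻¹ g_i · 0 = k_j⁻¹ · (v_i - v_j)`. -/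
theorem stmt3 {n : ℕ} {K : Type} [Group K] [TopologicalSpace K] [IsTopologicalGroup K]
    [CompactSpace K] [MeasurableSpace K] [BorelSpace K]
    (μ : Measure K) [μ.IsHaarMeasure] [IsProbabilityMeasure μ]
    (ρ : K →* Matrix.orthogonalGroup (Fin n) ℝ)
    (hρ : Continuous fun k => ((ρ k : Matrix.orthogonalGroup (Fin n) ℝ) : Matrix (Fin n) (Fin n) ℝ))
    (ξ : Fin n → ℝ)
    (m : ℕ) (hm : 0 < m) (c : Fin m → ℂ) (g : Fin m → (Fin n → ℝ) × K) :
    0 ≤ ∑ i, ∑ j,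
      phiK μ ρ (cplx ξ)
        (Matrix.mulVec (((ρ (g j).2)⁻¹ : Matrix.orthogonalGroup (Fin n) ℝ) : Matrix (Fin n) (Fin n) ℝ)
          ((g i).1 - (g j).1)) * (starRingEnd ℂ) (c j) * c i :=
  stmt3_general μ ρ hρ ξ m c g
end
end

section
/- Suppose K ⊆ O(n) is transitive on the unit sphere, n > 1. Then the map sending c ∈ ℂ* to the quadric Q_c and 0 to Q_0 ∪ {0} gives a bijection between ℂ and the set of equivalence classes of ℂⁿ under the relation ξ ∼ ξ' iff p(ξ) = p(ξ') for all K_ℂ-invariant polynomials p; equivalently, two points ξ, ξ' ∈ ℂⁿ satisfy p(ξ) = p(ξ') for all K_ℂ-invariant polynomials p if and only if b(ξ,ξ) = b(ξ',ξ'). -/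
noncomputable section

/-! An invariant polynomial `p` is determined by its restriction `u(t) = p(t e)` to the line
through a real unit vector `e`: transitivity moves every real `x` to `|x| e`, so
`p(x) = u(|x|)` on `ℝⁿ`. Some element of `K` sends `e` to `-e`, so `u` is even, `u(t) = h(t²)`.
Hence `p` and `h ∘ b` agree on `ℝⁿ`, which is Zariski dense in `ℂⁿ`, so `p = h ∘ b`.
Conversely `b` itself is invariant, `K_ℂ` consisting of complex orthogonal matrices. -/

open MvPolynomial Matrix

namespace Polynomial

variable {R : Type*} [CommRing R] [NoZeroDivisors R] [CharZero R] {u : R[X]}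

theorem coeff_eq_zero_of_comp_neg_X_eq_self (hu : u.comp (-X) = u) {k : ℕ} (hk : Odd k) :
    u.coeff k = 0 := by
  rw [show (-X : R[X]) = C (-1) * X by simp] at hu
  have h := congrArg (coeff · k) hu
  simp only [comp_C_mul_X_coeff, hk.neg_one_pow] at h
  have : (2 : R) * u.coeff k = 0 := by linear_combination -h
  simpa using this

theorem expand_contract_two_of_comp_neg_X_eq_self (hu : u.comp (-X) = u) :
    expand R 2 (contract 2 u) = u := by
  ext k
  rw [coeff_expand two_pos, coeff_contract two_ne_zero]
  split_ifs with h
  · rw [Nat.div_mul_cancel h]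
  · exact (coeff_eq_zero_of_comp_neg_X_eq_self hu (Nat.odd_iff.mpr (by omega))).symm

end Polynomial

namespace MvPolynomial

theorem eval_aeval_C_mul_X {σ R : Type*} [CommRing R] (p : MvPolynomial σ R) (e : σ → R)
    (t : R) :
    (aeval (fun i => Polynomial.C (e i) * Polynomial.X) p).eval t = eval (t • e) p := by
  rw [← Polynomial.coe_aeval_eq_eval, comp_aeval_apply]
  show _ = aeval (t • e) p
  congr 2
  funext i
  rw [map_mul, Polynomial.aeval_C, Polynomial.aeval_X, Pi.smul_apply, smul_eq_mul, mul_comm]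
  rfl

theorem eval_aeval {σ R : Type*} [CommRing R] (x : σ → R) (q : MvPolynomial σ R)
    (h : Polynomial R) :
    eval x (Polynomial.aeval q h) = h.eval (eval x q) := by
  simpa using (Polynomial.aeval_algHom_apply (aeval x) q h).symm

theorem eval_sum_X_sq {σ R : Type*} [Fintype σ] [CommRing R] (ξ : σ → R) :
    eval ξ (∑ i, X i ^ 2) = ξ ⬝ᵥ ξ := by
  simp [dotProduct, sq]

theorem eq_of_eval_ofReal_eq {σ : Type*} {p q : MvPolynomial σ ℂ}
    (h : ∀ x : σ → ℝ, eval (Complex.ofReal ∘ x) p = eval (Complex.ofReal ∘ x) q) :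
    p = q := by
  refine funext_set (fun _ => Set.range Complex.ofReal)
    (fun _ => Set.infinite_range_of_injective Complex.ofReal_injective) fun ξ hξ => ?_
  choose x hx using fun i => hξ i trivial
  rw [← _root_.funext hx]
  exact h x

end MvPolynomial

theorem Matrix.dotProduct_mulVec_mulVec_self {ι R : Type*} [Fintype ι] [DecidableEq ι]
    [CommSemiring R] {B : Matrix ι ι R} (hB : Bᵀ * B = 1) (v : ι → R) :
    (B *ᵥ v) ⬝ᵥ (B *ᵥ v) = v ⬝ᵥ v := by
  rw [dotProduct_mulVec, ← mulVec_transpose, mulVec_mulVec, hB, one_mulVec]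

theorem Matrix.transpose_map_mul_map_of_mem_orthogonalGroup {ι R S : Type*} [Fintype ι]
    [DecidableEq ι] [CommRing R] [CommRing S] (f : R →+* S) {A : Matrix ι ι R}
    (hA : A ∈ orthogonalGroup ι R) : (A.map f)ᵀ * A.map f = 1 := by
  rw [← transpose_map, ← Matrix.map_mul, (mem_orthogonalGroup_iff' ι R).mp hA,
    Matrix.map_one f f.map_zero f.map_one]

theorem Matrix.map_ofReal_mulVec {ι : Type*} [Fintype ι] (A : Matrix ι ι ℝ) (x : ι → ℝ) :
    A.map (↑) *ᵥ (Complex.ofReal ∘ x) = Complex.ofReal ∘ (A *ᵥ x) :=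
  funext fun i => (RingHom.map_mulVec Complex.ofRealHom A x i).symm

section SphereTransitive

variable {ι : Type*} [Fintype ι] {S : Set (Matrix ι ι ℝ)}
  (hS : ∀ x y : ι → ℝ, ∑ i, x i ^ 2 = 1 → ∑ i, y i ^ 2 = 1 →
    ∃ A ∈ S, A *ᵥ x = y)
include hS

theorem exists_mulVec_eq_sqrt_smul {e : ι → ℝ} (he : ∑ i, e i ^ 2 = 1) {x : ι → ℝ}
    (hx : x ≠ 0) :
    ∃ A ∈ S, A *ᵥ x = √(∑ i, x i ^ 2) • e := by
  set r := √(∑ i, x i ^ 2)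
  have hsum : 0 < ∑ i, x i ^ 2 := by
    obtain ⟨i, hi : x i ≠ 0⟩ := Function.ne_iff.mp hx
    exact Finset.sum_pos' (fun j _ => sq_nonneg (x j)) ⟨i, Finset.mem_univ i, by positivity⟩
  have hr : r ≠ 0 := (Real.sqrt_pos.mpr hsum).ne'
  have hunit : ∑ i, (r⁻¹ • x) i ^ 2 = 1 := by
    simp only [Pi.smul_apply, smul_eq_mul, mul_pow, ← Finset.mul_sum, inv_pow,
      Real.sq_sqrt hsum.le, r]
    exact inv_mul_cancel₀ hsum.ne'
  obtain ⟨A, hA, hAx⟩ := hS _ e hunit he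
  refine ⟨A, hA, ?_⟩
  rw [← hAx, mulVec_smul, smul_smul, mul_inv_cancel₀ hr, one_smul]

variable {p : MvPolynomial ι ℂ}
  (hp : ∀ A ∈ S, ∀ v : ι → ℂ, eval (A.map (↑) *ᵥ v) p = eval v p)
include hp

theorem eval_ofReal_eq_eval_sqrt_smul {e : ι → ℝ} (he : ∑ i, e i ^ 2 = 1) (x : ι → ℝ) :
    eval (Complex.ofReal ∘ x) p =
      eval ((√(∑ i, x i ^ 2) : ℂ) • (Complex.ofReal ∘ e)) p := by
  rcases eq_or_ne x 0 with rfl | hx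
  · simp
  obtain ⟨A, hA, hAx⟩ := exists_mulVec_eq_sqrt_smul hS he hx
  rw [← hp A hA, map_ofReal_mulVec, hAx]
  congr 2
  funext i
  simp

theorem eval_neg_smul_eq_eval_smul {e : ι → ℝ} (he : ∑ i, e i ^ 2 = 1) (t : ℂ) :
    eval (-t • (Complex.ofReal ∘ e)) p = eval (t • (Complex.ofReal ∘ e)) p := by
  obtain ⟨A, hA, hAe⟩ := hS e (-e) he (by simpa using he)
  rw [← hp A hA, mulVec_smul, map_ofReal_mulVec, hAe]
  congr 2
  funext i
  simp

theorem exists_eq_aeval_sum_X_sq [Nonempty ι] :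
    ∃ h : Polynomial ℂ, p = Polynomial.aeval (∑ i, X i ^ 2) h := by
  classical
  obtain ⟨i₀⟩ := ‹Nonempty ι›
  set e : ι → ℝ := Pi.single i₀ 1
  have he : ∑ i, e i ^ 2 = 1 := by simp [e, Pi.single_apply, apply_ite (· ^ 2)]
  set u := aeval (fun i => Polynomial.C (e i : ℂ) * Polynomial.X) p
  have hu : u.comp (-Polynomial.X) = u := Polynomial.funext fun t => by
    simp only [Polynomial.eval_comp, Polynomial.eval_neg, Polynomial.eval_X, u, eval_aeval_C_mul_X]
    exact eval_neg_smul_eq_eval_smul hS hp he t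
  -- `contract 2 u` is the `h` with `h (t ^ 2) = u t`
  refine ⟨Polynomial.contract 2 u, eq_of_eval_ofReal_eq fun x => ?_⟩
  set c := ∑ i, x i ^ 2
  calc eval (Complex.ofReal ∘ x) p = u.eval (√c : ℂ) := by
        rw [eval_ofReal_eq_eval_sqrt_smul hS hp he, eval_aeval_C_mul_X]
        rfl
    _ = (Polynomial.contract 2 u).eval ((√c : ℂ) ^ 2) := by
        rw [← Polynomial.expand_eval, Polynomial.expand_contract_two_of_comp_neg_X_eq_self hu]
    _ = eval (Complex.ofReal ∘ x)
          (Polynomial.aeval (∑ i, X i ^ 2) (Polynomial.contract 2 u)) := by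
        rw [eval_aeval, eval_sum_X_sq, ← Complex.ofReal_pow, Real.sq_sqrt (by positivity)]
        simp [dotProduct, c, sq]

end SphereTransitive

theorem stmt10_general {n : ℕ}
    (K : Subgroup (Matrix.orthogonalGroup (Fin n) ℝ))
    (hKtrans : ∀ x y : Fin n → ℝ, (∑ i, x i ^ 2) = 1 → (∑ i, y i ^ 2) = 1 →
      ∃ k ∈ K, Matrix.mulVec ((k : Matrix.orthogonalGroup (Fin n) ℝ) : Matrix (Fin n) (Fin n) ℝ) x = y)
    (ξ ξ' : Fin n → ℂ) :
    (∀ p : MvPolynomial (Fin n) ℂ,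
        (∀ k ∈ K, ∀ v : Fin n → ℂ,
          MvPolynomial.eval
            (Matrix.mulVec (matC ((k : Matrix.orthogonalGroup (Fin n) ℝ) : Matrix (Fin n) (Fin n) ℝ)) v) p
            = MvPolynomial.eval v p) →
        MvPolynomial.eval ξ p = MvPolynomial.eval ξ' p) ↔
      bC ξ ξ = bC ξ' ξ' := by
  constructor
  · intro hinv
    have hb := hinv (∑ i, X i ^ 2) fun k _ v => by
      rw [eval_sum_X_sq, eval_sum_X_sq]
      exact dotProduct_mulVec_mulVec_self
        (transpose_map_mul_map_of_mem_orthogonalGroup Complex.ofRealHom k.2) v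
    rwa [eval_sum_X_sq, eval_sum_X_sq] at hb
  · intro hb p hp
    rcases isEmpty_or_nonempty (Fin n) with _ | _
    · rw [Subsingleton.elim ξ ξ']
    have hS : ∀ x y : Fin n → ℝ, ∑ i, x i ^ 2 = 1 → ∑ i, y i ^ 2 = 1 →
        ∃ A ∈ Subtype.val '' (K : Set (orthogonalGroup (Fin n) ℝ)), A *ᵥ x = y :=
      fun x y hx hy =>
        let ⟨k, hk, hkx⟩ := hKtrans x y hx hy
        ⟨k, Set.mem_image_of_mem _ hk, hkx⟩
    obtain ⟨h, rfl⟩ := exists_eq_aeval_sum_X_sq hS (by rintro _ ⟨k, hk, rfl⟩; exact hp k hk)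
    rw [eval_aeval, eval_aeval, eval_sum_X_sq, eval_sum_X_sq]
    exact congrArg h.eval hb

/-- if `K ⊆ O(n)`, `n > 1`, is transitive on the unit sphere,
then two points `ξ, ξ' ∈ ℂⁿ` take the same value under every invariant
polynomial (invariance under the complexified action of `K`, equivalently under
`K_ℂ`) if and only if `b(ξ,ξ) = b(ξ',ξ')`.  Thus `ℂⁿ//K_ℂ ≅ ℂ`, the class of
`ξ` corresponding to `c = b(ξ,ξ)` (quadric `Q_c` for `c ≠ 0`, `Q_0 ∪ {0}` for
`c = 0`). -/
theorem stmt10 {n : ℕ} (hn : 1 < n)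
    (K : Subgroup (Matrix.orthogonalGroup (Fin n) ℝ))
    (hKtrans : ∀ x y : Fin n → ℝ, (∑ i, x i ^ 2) = 1 → (∑ i, y i ^ 2) = 1 →
      ∃ k ∈ K, Matrix.mulVec ((k : Matrix.orthogonalGroup (Fin n) ℝ) : Matrix (Fin n) (Fin n) ℝ) x = y)
    (ξ ξ' : Fin n → ℂ) :
    (∀ p : MvPolynomial (Fin n) ℂ,
        (∀ k ∈ K, ∀ v : Fin n → ℂ,
          MvPolynomial.eval
            (Matrix.mulVec (matC ((k : Matrix.orthogonalGroup (Fin n) ℝ) : Matrix (Fin n) (Fin n) ℝ)) v) p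
            = MvPolynomial.eval v p) →
        MvPolynomial.eval ξ p = MvPolynomial.eval ξ' p) ↔
      bC ξ ξ = bC ξ' ξ' :=
  stmt10_general K hKtrans ξ ξ'
end
end

section
/- Suppose K ⊆ O(n) acts transitively on the unit sphere in ℝⁿ. If D is a G-invariant (i.e., translation- and K-invariant) constant coefficient differential operator on ℝⁿ, then D is a polynomial in the Laplacian: D ∈ ℂ[Δ]. Equivalently (via Fourier transform): every K-invariant polynomial p on ℝⁿ (or ℂⁿ) is a polynomial in the quadratic form q(x) = ∑ x_i². -/
noncomputable section

lemma coeff_comp_negX (g : Polynomial ℝ) (k : ℕ) :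
    (g.comp (-Polynomial.X)).coeff k = (-1)^k * g.coeff k := by
  induction g using Polynomial.induction_on' with
  | add p q hp hq => simp [Polynomial.add_comp, hp, hq]; ring
  | monomial i a =>
      rw [Polynomial.monomial_comp]
      rw [neg_pow, ← Polynomial.C_1, ← Polynomial.C_neg, ← Polynomial.C_pow]
      rw [← mul_assoc, ← Polynomial.C_mul]
      simp only [Polynomial.coeff_C_mul, Polynomial.coeff_monomial, Polynomial.coeff_X_pow]
      by_cases h : i = k <;> simp [h, mul_comm]; exact fun h2 => absurd h2.symm h

lemma even_poly (g : Polynomial ℝ) (hg : ∀ t : ℝ, g.eval (-t) = g.eval t) :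
    ∃ h : Polynomial ℝ, ∀ t : ℝ, h.eval (t^2) = g.eval t := by
  have hcomp : g.comp (-Polynomial.X) = g := by
    apply Polynomial.funext
    intro r
    simp [Polynomial.eval_comp, hg]
  have hodd : ∀ k, Odd k → g.coeff k = 0 := by
    intro k hk
    have := coeff_comp_negX g k
    rw [hcomp, hk.neg_one_pow] at this
    linarith
  refine ⟨∑ k ∈ Finset.range (g.natDegree + 1), Polynomial.C (g.coeff (2*k)) * Polynomial.X^k, ?_⟩
  intro t
  have key : ∀ N : ℕ, ∑ j ∈ Finset.range (2*N), g.coeff j * t^j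
      = ∑ k ∈ Finset.range N, g.coeff (2*k) * (t^2)^k := by
    intro N
    induction N with
    | zero => simp
    | succ N ih =>
        rw [Nat.mul_succ, Finset.sum_range_succ, Finset.sum_range_succ,
          Finset.sum_range_succ, ih, hodd (2*N+1) ⟨N, by ring⟩]
        rw [pow_mul]; ring
  rw [Polynomial.eval_finset_sum]
  simp only [Polynomial.eval_mul, Polynomial.eval_C, Polynomial.eval_pow, Polynomial.eval_X]
  rw [← key, Polynomial.eval_eq_sum_range' (show g.natDegree < 2*(g.natDegree+1) by omega) t]

/-- if `K ⊆ O(n)` is transitive on the unit sphere, then every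
`K`-invariant polynomial `p` on ℝⁿ is a polynomial in the quadratic form
`q(x) = ∑ xᵢ²`.  (Via the Fourier transform this says that every `G`-invariant
constant coefficient differential operator is a polynomial in the Laplacian,
i.e. `𝒟(G,K) = ℂ[Δ]`.) -/
theorem stmt11 {n : ℕ}
    (K : Subgroup (Matrix.orthogonalGroup (Fin n) ℝ))
    (hKtrans : ∀ x y : Fin n → ℝ, (∑ i, x i ^ 2) = 1 → (∑ i, y i ^ 2) = 1 →
      ∃ k ∈ K, Matrix.mulVec ((k : Matrix.orthogonalGroup (Fin n) ℝ) : Matrix (Fin n) (Fin n) ℝ) x = y)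
    (p : MvPolynomial (Fin n) ℝ)
    (hp : ∀ k ∈ K, ∀ x : Fin n → ℝ,
      MvPolynomial.eval
        (Matrix.mulVec ((k : Matrix.orthogonalGroup (Fin n) ℝ) : Matrix (Fin n) (Fin n) ℝ) x) p
        = MvPolynomial.eval x p) :
    ∃ r : Polynomial ℝ, ∀ x : Fin n → ℝ,
      MvPolynomial.eval x p = Polynomial.eval (∑ i, x i ^ 2) r := by
  rcases Nat.eq_zero_or_pos n with hn | hn
  · subst hn
    refine ⟨Polynomial.C (MvPolynomial.eval (fun _ => 0) p), fun x => ?_⟩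
    have : x = fun _ => 0 := funext fun i => i.elim0
    simp [this]
  haveI : NeZero n := ⟨hn.ne'⟩
  -- the unit vector e₁
  set e : Fin n → ℝ := fun i => if i = 0 then (1:ℝ) else 0 with he
  have hesum : (∑ i, e i ^ 2) = 1 := by
    simp [he, apply_ite (· ^ 2), Finset.sum_ite_eq']
  -- one-variable restriction
  set g : Polynomial ℝ :=
    MvPolynomial.aeval (fun i => if i = 0 then (Polynomial.X : Polynomial ℝ) else 0) p with hgdef
  have hg_eval : ∀ t : ℝ, g.eval t = MvPolynomial.eval (t • e) p := by
    intro t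
    rw [hgdef, ← Polynomial.coe_aeval_eq_eval,
      MvPolynomial.comp_aeval_apply (f := fun i => if i = (0 : Fin n) then (Polynomial.X : Polynomial ℝ) else 0) (Polynomial.aeval t) p]
    have : (fun i => (Polynomial.aeval t)
        (if i = (0 : Fin n) then (Polynomial.X : Polynomial ℝ) else 0)) = t • e := by
      funext i
      by_cases h : i = 0 <;> simp [h, he]
    rw [this, ← MvPolynomial.coe_aeval_eq_eval]
    rfl
  have heven : ∀ t : ℝ, g.eval (-t) = g.eval t := by
    intro t
    obtain ⟨k, hk, hke⟩ := hKtrans e (-e) hesum (by simpa using hesum)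
    have hker := hp k hk (t • e)
    rw [Matrix.mulVec_smul, hke] at hker
    have h1 : t • (-e) = (-t) • e := by
      funext i; simp [Pi.smul_apply]
    rw [h1] at hker
    rw [hg_eval, hg_eval, hker]
  obtain ⟨h, hh⟩ := even_poly g heven
  refine ⟨h, fun x => ?_⟩
  have hs0 : (0:ℝ) ≤ ∑ i, x i ^ 2 := Finset.sum_nonneg fun i _ => sq_nonneg _
  set s := ∑ i, x i ^ 2 with hsdef
  set t := Real.sqrt s with htdef
  have ht2 : t ^ 2 = s := Real.sq_sqrt hs0
  have key : MvPolynomial.eval x p = MvPolynomial.eval (t • e) p := by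
    rcases eq_or_lt_of_le hs0 with hz | hpos
    · have hx : x = 0 := by
        funext i
        have := (Finset.sum_eq_zero_iff_of_nonneg
          (fun i _ => sq_nonneg (x i))).mp hz.symm i (Finset.mem_univ i)
        exact pow_eq_zero_iff (n := 2) (by norm_num) |>.mp this
      have htz : t = 0 := by rw [htdef, ← hz, Real.sqrt_zero]
      rw [hx, htz, zero_smul]
    · have htpos : 0 < t := Real.sqrt_pos.mpr hpos
      have hxsum : (∑ i, (t⁻¹ • x) i ^ 2) = 1 := by
        simp only [Pi.smul_apply, smul_eq_mul, mul_pow, ← Finset.mul_sum, ← hsdef]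
        rw [← ht2]
        field_simp
      obtain ⟨k, hk, hke⟩ := hKtrans e (t⁻¹ • x) hesum hxsum
      have hker := hp k hk (t • e)
      rw [Matrix.mulVec_smul, hke, smul_smul, mul_inv_cancel₀ htpos.ne', one_smul] at hker
      exact hker
  rw [key, ← hg_eval, ← hh, ht2]
end
end
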